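/- Let G₁ and G₂ be groups with a common subgroup C that is malnormal in each Gᵢ (i.e., C ∩ gCg⁻¹ = {1} for every g ∈ Gᵢ \ C). Then C is malnormal in the amalgamated free product G = G₁ ∗_C G₂. -/

import Mathlib

/-- A subgroup `C` of a group `G` is *malnormal* if `C ∩ gCg⁻¹ = {1}` for every `g ∉ C`. -/
def IsMalnormal {G : Type*} [Group G] (C : Subgroup G) : Prop :=
  ∀ g : G, g ∉ C → ∀ x : G, x ∈ C → g⁻¹ * x * g ∈ C → x = 1

/-!
Write `g ∉ C` as `c w` with `c ∈ C` and `w = g₁ ⋯ gₙ` a nonempty reduced word, `g₁ ∈ Gᵢ`.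
If `g⁻¹ a g = b` with `a, b ∈ C`, then, after conjugating `a` by `c`, the letter
`k = g₁⁻¹ a g₁ ∈ Gᵢ` satisfies `u⁻¹ k u = b` for the tail `u = g₂ ⋯ gₙ`. Were `k ∉ C`, the
word `u⁻¹ k u` would be reduced and nonempty, so by the normal form theorem it could not
represent an element of `C`. Hence `k ∈ C ∩ g₁⁻¹ C g₁` with `g₁ ∉ C`, and malnormality of `C`
in `Gᵢ` gives `a = 1`.
-/

theorem Subgroup.IsComplement.eq_one_of_mem_of_mem {G : Type*} [Group G] {S T : Set G}
    (h : Subgroup.IsComplement S T) (hS : 1 ∈ S) (hT : 1 ∈ T) {g : G} (hgS : g ∈ S)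
    (hgT : g ∈ T) : g = 1 := by
  have := h.equiv_snd_eq_self_of_mem_of_one_mem hS hgT
  rw [h.equiv_snd_eq_one_of_mem_of_one_mem hT hgS] at this
  exact congrArg Subtype.val this.symm

namespace Monoid.CoprodI.Word

variable {ι : Type*}

def append {M : ι → Type*} [∀ i, Monoid (M i)] (w₁ w₂ : Word M)
    (h : ∀ x ∈ w₁.toList.getLast?, ∀ y ∈ w₂.toList.head?, x.1 ≠ y.1) : Word M where
  toList := w₁.toList ++ w₂.toList
  ne_one l hl := (List.mem_append.1 hl).elim (w₁.ne_one l) (w₂.ne_one l)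
  chain_ne := w₁.chain_ne.append w₂.chain_ne h

@[simp]
theorem prod_append {M : ι → Type*} [∀ i, Monoid (M i)] (w₁ w₂ : Word M) h :
    (append w₁ w₂ h).prod = w₁.prod * w₂.prod := by
  simp [append, prod]

variable {G : ι → Type*} [∀ i, Group (G i)]

def inv (w : Word G) : Word G where
  toList := w.toList.reverse.map fun l => ⟨l.1, l.2⁻¹⟩
  ne_one l hl := by
    obtain ⟨l, hl', rfl⟩ := List.mem_map.1 hl
    exact inv_ne_one.2 (w.ne_one l (List.mem_reverse.1 hl'))
  chain_ne := by
    rw [List.isChain_map, List.isChain_reverse]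
    exact w.chain_ne.imp fun _ _ h => h.symm

@[simp]
theorem prod_inv (w : Word G) : w.inv.prod = w.prod⁻¹ := by
  simp [inv, prod, List.prod_inv_reverse, Function.comp_def]

end Monoid.CoprodI.Word

namespace Monoid.PushoutI

open CoprodI

variable {ι H : Type*} {G : ι → Type*} [Group H] [∀ i, Group (G i)] {φ : ∀ i, H →* G i}

theorem reduced_cons_iff {i : ι} {g : G i} {w : Word G} (hw : w.fstIdx ≠ some i) (hg : g ≠ 1) :
    Reduced φ (Word.cons g w hw hg) ↔ g ∉ (φ i).range ∧ Reduced φ w := by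
  simp [Reduced]

theorem Reduced.inv {w : Word G} (hw : Reduced φ w) : Reduced φ w.inv := by
  intro l hl
  obtain ⟨l, hl', rfl⟩ := List.mem_map.1 hl
  exact fun h => hw l (List.mem_reverse.1 hl') (inv_mem_iff.1 h)

theorem Reduced.append {w₁ w₂ : Word G} (h₁ : Reduced φ w₁) (h₂ : Reduced φ w₂) h :
    Reduced φ (w₁.append w₂ h) := by
  intro l hl
  exact (List.mem_append.1 hl).elim (h₁ l) (h₂ l)

theorem NormalWord.reduced {d : Transversal φ} (w : NormalWord d) : Reduced φ w.toWord := by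
  rintro ⟨i, g⟩ hg hφg
  exact w.ne_one _ hg <|
    (d.compl i).eq_one_of_mem_of_mem (one_mem _) (d.one_mem i) hφg (w.normalized i g hg)

theorem exists_eq_base_mul_reduced (hφ : ∀ i, Function.Injective (φ i)) (g : PushoutI φ) :
    ∃ (c : H) (w : Word G), Reduced φ w ∧ g = base φ c * ofCoprodI w.prod := by
  classical
  obtain ⟨d⟩ := NormalWord.transversal_nonempty φ hφ
  let w := (NormalWord.equiv (d := d)) g
  exact ⟨w.head, w.toWord, w.reduced, (NormalWord.equiv.symm_apply_apply g).symm⟩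

theorem Reduced.conj_of_notMem_base_range (hφ : ∀ i, Function.Injective (φ i)) {w : Word G}
    (hw : Reduced φ w) {i : ι} (hi : w.fstIdx ≠ some i) {k : G i} (hk : k ∉ (φ i).range) :
    (ofCoprodI w.prod)⁻¹ * of i k * ofCoprodI w.prod ∉ (base φ).range := by
  intro hmem
  have hk1 : k ≠ 1 := fun h => hk (h ▸ one_mem _)
  have hjoin : ∀ x ∈ w.inv.toList.getLast?, ∀ y ∈ (Word.cons k w hi hk1).toList.head?,
      x.1 ≠ y.1 := by
    intro x hx y hy
    simp only [Word.inv, List.getLast?_map, List.getLast?_reverse, Option.mem_def,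
      Option.map_eq_some_iff] at hx
    obtain ⟨l, hl, rfl⟩ := hx
    simp only [Word.cons_toList, List.head?_cons, Option.mem_def, Option.some.injEq] at hy
    subst hy
    exact (Word.fstIdx_ne_iff.1 hi l hl).symm
  have hred := hw.inv.append ((reduced_cons_iff hi hk1).2 ⟨hk, hw⟩) hjoin
  have := congrArg Word.toList (hred.eq_empty_of_mem_range hφ (by simpa [mul_assoc] using hmem))
  simp [Word.append, Word.empty] at this

theorem Reduced.eq_one_of_base_mul_eq_mul_base (hφ : ∀ i, Function.Injective (φ i))
    (hmal : ∀ i, IsMalnormal (φ i).range) {w : Word G} (hw : Reduced φ w) (hne : w ≠ .empty)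
    {a b : H} (h : base φ a * ofCoprodI w.prod = ofCoprodI w.prod * base φ b) : a = 1 := by
  cases w using Word.consRecOn with
  | empty => exact absurd rfl hne
  | cons i g u hu hg =>
    obtain ⟨hgC, hu'⟩ := (reduced_cons_iff hu hg).1 hw
    rw [Word.prod_cons, map_mul, ofCoprodI_of] at h
    have hk : g⁻¹ * φ i a * g ∈ (φ i).range := by
      by_contra hk
      refine hu'.conj_of_notMem_base_range hφ hu hk ⟨b, ?_⟩
      rw [map_mul, map_mul, map_inv, of_apply_eq_base]
      calc base φ b
          = (of i g * ofCoprodI u.prod)⁻¹ * (base φ a * (of i g * ofCoprodI u.prod)) := by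
            rw [h]; group
        _ = _ := by group
    exact (map_eq_one_iff _ (hφ i)).1 (hmal i g hgC _ ⟨a, rfl⟩ hk)

theorem isMalnormal_base_range (hφ : ∀ i, Function.Injective (φ i))
    (hmal : ∀ i, IsMalnormal (φ i).range) : IsMalnormal (base φ).range := by
  rintro g hg _ ⟨a, rfl⟩ ⟨b, hb⟩
  obtain ⟨c, w, hw, rfl⟩ := exists_eq_base_mul_reduced hφ g
  have hne : w ≠ .empty := by
    rintro rfl
    exact hg ⟨c, by simp⟩
  have hconj : base φ (c⁻¹ * a * c) * ofCoprodI w.prod = ofCoprodI w.prod * base φ b := by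
    rw [hb]
    simp only [map_mul, map_inv, mul_inv_rev]
    group
  have ha : a = 1 := by
    simpa using (conj_eq_one_iff (a := c⁻¹)).1
      (by simpa using hw.eq_one_of_base_mul_eq_mul_base hφ hmal hne hconj)
  rw [ha, map_one]

end Monoid.PushoutI

/-- If `C` embeds as a malnormal subgroup of both `G₁` and `G₂`, then the image of `C`
in the amalgamated free product `G₁ ∗_C G₂` is malnormal. -/
theorem malnormal_amalgamated {C : Type*} [Group C] {G : Fin 2 → Type*}
    [∀ i, Group (G i)] (φ : ∀ i, C →* G i) (hinj : ∀ i, Function.Injective (φ i))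
    (hmal : ∀ i, IsMalnormal (φ i).range) :
    IsMalnormal (Monoid.PushoutI.base φ).range :=
  Monoid.PushoutI.isMalnormal_base_range hinj hmal
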